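/- arXiv:1811.08327 — 6 statements merged into one kernel-verified Lean document; each statement's English description precedes it below -/
import Mathlib

section
/- If A ∈ ℂ^(n×n) and B ∈ ℂ^(m×m) are diagonalizable with A = U D_A U⁻¹ and Bᴴ = V D_{Bᴴ} V⁻¹, then the Sylvester operator S(X) = AX + XB is a normal operator on ℂ^(n×m) equipped with the inner product ⟨X, Y⟩_{U,V} = ⟨U⁻¹ X V⁻ᴴ, U⁻¹ Y V⁻ᴴ⟩_F. -/
/-!
Conjugation `X ↦ U⁻¹ X V⁻ᴴ` is an isometry from `⟨·,·⟩_{U,V}` to the Frobenius inner product,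
and it turns `S(X) = AX + XB` into the diagonal Sylvester operator `Z ↦ D_A Z + Z D_{Bᴴ}ᴴ`.
With respect to the Frobenius inner product the adjoint of `Z ↦ PZ + ZQ` is `Z ↦ PᴴZ + ZQᴴ`,
so `S*(Y) = U D_Aᴴ U⁻¹ Y + Y V⁻ᴴ D_{Bᴴ} Vᴴ`. The left coefficients of `S` and `S*` are
simultaneously diagonalised by `U`, the right ones by `V⁻ᴴ`, so they commute pairwise, and
Sylvester operators with pairwise commuting coefficients commute.
-/

open Matrix

/-- The Frobenius inner product ⟨X, Y⟩_F = trace(Yᴴ X). -/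
noncomputable def froInner {n m : ℕ} (X Y : Matrix (Fin n) (Fin m) ℂ) : ℂ :=
  (Yᴴ * X).trace

/-- The inner product ⟨X,Y⟩_{U,V}. -/
noncomputable def uvInner {n m : ℕ} (U : Matrix (Fin n) (Fin n) ℂ)
    (V : Matrix (Fin m) (Fin m) ℂ) (X Y : Matrix (Fin n) (Fin m) ℂ) : ℂ :=
  froInner (U⁻¹ * X * (V⁻¹)ᴴ) (U⁻¹ * Y * (V⁻¹)ᴴ)

theorem Matrix.IsDiag.commute {n R : Type*} [Fintype n] [DecidableEq n] [CommSemiring R]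
    {D E : Matrix n n R} (hD : D.IsDiag) (hE : E.IsDiag) : Commute D E := by
  rw [← hD.diagonal_diag, ← hE.diagonal_diag]
  exact commute_diagonal _ _

theorem Matrix.commute_conj {n R : Type*} [Fintype n] [DecidableEq n] [CommRing R]
    {U D E : Matrix n n R} (hU : IsUnit U.det) (h : Commute D E) :
    Commute (U * D * U⁻¹) (U * E * U⁻¹) := by
  change U * D * U⁻¹ * (U * E * U⁻¹) = U * E * U⁻¹ * (U * D * U⁻¹)
  simp only [Matrix.mul_assoc, nonsing_inv_mul_cancel_left U _ hU]
  rw [← Matrix.mul_assoc D, h.eq, Matrix.mul_assoc]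

section Sylvester

variable {R n m : Type*} [Fintype n] [Fintype m]

def sylvester [CommSemiring R] (P : Matrix n n R) (Q : Matrix m m R) :
    Matrix n m R →ₗ[R] Matrix n m R where
  toFun X := P * X + X * Q
  map_add' X Y := by simp only [Matrix.mul_add, Matrix.add_mul]; abel
  map_smul' c X := by simp only [Matrix.mul_smul, Matrix.smul_mul, smul_add, RingHom.id_apply]

theorem sylvester_apply [CommSemiring R] (P : Matrix n n R) (Q : Matrix m m R)
    (X : Matrix n m R) : sylvester P Q X = P * X + X * Q := rfl

theorem commute_sylvester [CommSemiring R] {P P' : Matrix n n R} {Q Q' : Matrix m m R}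
    (hP : Commute P P') (hQ : Commute Q Q') :
    Commute (sylvester P Q) (sylvester P' Q') := by
  ext1 X
  simp only [Module.End.mul_apply, sylvester_apply, Matrix.mul_add, Matrix.add_mul,
    ← Matrix.mul_assoc, hP.eq]
  simp only [Matrix.mul_assoc, hQ.eq]
  abel

theorem sylvester_conj [DecidableEq n] [DecidableEq m] [CommRing R]
    {U : Matrix n n R} {W : Matrix m m R} (hU : IsUnit U.det) (hW : IsUnit W.det)
    (D : Matrix n n R) (E : Matrix m m R) (X : Matrix n m R) :
    U⁻¹ * sylvester (U * D * U⁻¹) (W * E * W⁻¹) X * W = sylvester D E (U⁻¹ * X * W) := by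
  simp only [sylvester_apply, Matrix.mul_add, Matrix.add_mul, Matrix.mul_assoc,
    nonsing_inv_mul_cancel_left U _ hU, nonsing_inv_mul W hW, Matrix.mul_one]

end Sylvester

section Frobenius

variable {n m : ℕ}

theorem froInner_add_left (X X' Y : Matrix (Fin n) (Fin m) ℂ) :
    froInner (X + X') Y = froInner X Y + froInner X' Y := by
  simp only [froInner, Matrix.mul_add, trace_add]

theorem froInner_add_right (X Y Y' : Matrix (Fin n) (Fin m) ℂ) :
    froInner X (Y + Y') = froInner X Y + froInner X Y' := by
  simp only [froInner, conjTranspose_add, Matrix.add_mul, trace_add]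

theorem froInner_mul_left (P : Matrix (Fin n) (Fin n) ℂ) (X Y : Matrix (Fin n) (Fin m) ℂ) :
    froInner (P * X) Y = froInner X (Pᴴ * Y) := by
  simp only [froInner, conjTranspose_mul, conjTranspose_conjTranspose, Matrix.mul_assoc]

theorem froInner_mul_right (Q : Matrix (Fin m) (Fin m) ℂ) (X Y : Matrix (Fin n) (Fin m) ℂ) :
    froInner (X * Q) Y = froInner X (Y * Qᴴ) := by
  simp only [froInner, conjTranspose_mul, conjTranspose_conjTranspose, ← Matrix.mul_assoc]
  rw [Matrix.mul_assoc Q]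
  exact trace_mul_comm _ _

theorem froInner_sylvester (P : Matrix (Fin n) (Fin n) ℂ) (Q : Matrix (Fin m) (Fin m) ℂ)
    (X Y : Matrix (Fin n) (Fin m) ℂ) :
    froInner (sylvester P Q X) Y = froInner X (sylvester Pᴴ Qᴴ Y) := by
  rw [sylvester_apply, sylvester_apply, froInner_add_left, froInner_add_right,
    froInner_mul_left, froInner_mul_right]

end Frobenius

/-- if A = U D_A U⁻¹ and Bᴴ = V D_{Bᴴ} V⁻¹ are diagonalizable, then the
Sylvester operator S(X) = AX + XB is normal with respect to ⟨·,·⟩_{U,V}: there is an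
operator S* which is adjoint to S and commutes with S. -/
theorem stmt3 {n m : ℕ} (A U DA : Matrix (Fin n) (Fin n) ℂ)
    (B V DBH : Matrix (Fin m) (Fin m) ℂ)
    (hU : IsUnit U.det) (hV : IsUnit V.det)
    (hDA : DA.IsDiag) (hDBH : DBH.IsDiag)
    (hA : A = U * DA * U⁻¹) (hB : Bᴴ = V * DBH * V⁻¹) :
    ∃ Sstar : Matrix (Fin n) (Fin m) ℂ →ₗ[ℂ] Matrix (Fin n) (Fin m) ℂ,
      (∀ X Y, uvInner U V (A * X + X * B) Y = uvInner U V X (Sstar Y)) ∧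
      (∀ X, A * (Sstar X) + (Sstar X) * B = Sstar (A * X + X * B)) := by
  set W := (V⁻¹)ᴴ
  have hW : IsUnit W.det := by
    rw [det_conjTranspose]
    exact (isUnit_nonsing_inv_det V hV).star
  have hB' : B = W * DBHᴴ * W⁻¹ := by
    rw [← conjTranspose_conjTranspose B, hB, ← conjTranspose_nonsing_inv,
      nonsing_inv_nonsing_inv V hV]
    simp only [W, conjTranspose_mul, Matrix.mul_assoc]
  refine ⟨sylvester (U * DAᴴ * U⁻¹) (W * DBH * W⁻¹), fun X Y => ?_, fun X => ?_⟩
  · rw [← sylvester_apply, uvInner, uvInner, hA, hB', sylvester_conj hU hW,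
      froInner_sylvester, sylvester_conj hU hW, conjTranspose_conjTranspose]
  · have hcomm : Commute (sylvester A B) (sylvester (U * DAᴴ * U⁻¹) (W * DBH * W⁻¹)) := by
      rw [hA, hB']
      exact commute_sylvester (commute_conj hU (hDA.commute hDA.conjTranspose))
        (commute_conj hW (hDBH.conjTranspose.commute hDBH))
    exact LinearMap.congr_fun hcomm.eq X
end

section
/- The operator norm of the Sylvester operator S(X) = AX + XB with respect to the norm ‖X‖_{U,V} = √⟨U⁻¹ X V⁻ᴴ, U⁻¹ X V⁻ᴴ⟩_F equals max over i, j of |α_i + β_j|, where α_i are the eigenvalues of A and β_j the eigenvalues of B. -/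
open Matrix

/-- The norm ‖X‖_{U,V} = √⟨U⁻¹ X V⁻ᴴ, U⁻¹ X V⁻ᴴ⟩_F. -/
noncomputable def uvNorm {n m : ℕ} (U : Matrix (Fin n) (Fin n) ℂ)
    (V : Matrix (Fin m) (Fin m) ℂ) (X : Matrix (Fin n) (Fin m) ℂ) : ℝ :=
  Real.sqrt (froInner (U⁻¹ * X * (V⁻¹)ᴴ) (U⁻¹ * X * (V⁻¹)ᴴ)).re

/-!
In the coordinates `Y = U⁻¹ X V⁻ᴴ` the norm `‖·‖_{U,V}` is the Frobenius norm, and since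
`A = U D_A U⁻¹` and `B = V⁻ᴴ D_B Vᴴ`, the Sylvester operator becomes the entrywise multiplication
`Y i j ↦ (α i + β j) * Y i j`. Entrywise multiplication by `C` scales the Frobenius norm by at most
`max |C i j|`, with equality at the matrix unit of a maximizing entry.
-/

attribute [local instance] Matrix.frobeniusNormedAddCommGroup

namespace Matrix

theorem hadamard_single {α ι κ : Type*} [MulZeroClass α] [DecidableEq ι] [DecidableEq κ]
    (C : Matrix ι κ α) (i : ι) (j : κ) (c : α) :
    C ⊙ single i j c = single i j (C i j * c) := by
  ext i' j'
  simp only [hadamard_apply, single_apply]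
  split_ifs with h
  · rw [h.1, h.2]
  · exact mul_zero _

section Frobenius

variable {𝕜 ι κ : Type*} [NormedDivisionRing 𝕜] [Fintype ι] [Fintype κ]

theorem frobenius_norm_sq (Y : Matrix ι κ 𝕜) : ‖Y‖ ^ 2 = ∑ i, ∑ j, ‖Y i j‖ ^ 2 := by
  change ‖WithLp.toLp 2 fun i => WithLp.toLp 2 fun j => Y i j‖ ^ 2 = _
  simp [PiLp.norm_sq_eq_of_L2]

theorem frobenius_norm_hadamard_le {C : Matrix ι κ 𝕜} {M : ℝ} (hM : 0 ≤ M)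
    (hC : ∀ i j, ‖C i j‖ ≤ M) (Y : Matrix ι κ 𝕜) : ‖C ⊙ Y‖ ≤ M * ‖Y‖ := by
  refine le_of_pow_le_pow_left₀ two_ne_zero (by positivity) ?_
  rw [mul_pow, frobenius_norm_sq, frobenius_norm_sq, Finset.mul_sum]
  refine Finset.sum_le_sum fun i _ => ?_
  rw [Finset.mul_sum]
  refine Finset.sum_le_sum fun j _ => ?_
  rw [hadamard_apply, norm_mul, mul_pow]
  gcongr
  exact hC i j

variable [DecidableEq ι] [DecidableEq κ]

theorem frobenius_norm_single (i : ι) (j : κ) (c : 𝕜) : ‖single i j c‖ = ‖c‖ := by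
  refine (pow_left_inj₀ (norm_nonneg _) (norm_nonneg _) two_ne_zero).1 ?_
  rw [frobenius_norm_sq]
  simp [single_apply, ite_and, apply_ite]

theorem isGreatest_frobenius_norm_hadamard_div [Nonempty ι] [Nonempty κ] (C : Matrix ι κ 𝕜) :
    IsGreatest ((fun Y => ‖C ⊙ Y‖ / ‖Y‖) '' {Y | Y ≠ 0}) (⨆ i, ⨆ j, ‖C i j‖) := by
  obtain ⟨i₀, hi₀⟩ := exists_eq_ciSup_of_finite (f := fun i => ⨆ j, ‖C i j‖)
  obtain ⟨j₀, hj₀⟩ := exists_eq_ciSup_of_finite (f := fun j => ‖C i₀ j‖)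
  have hmax : ‖C i₀ j₀‖ = ⨆ i, ⨆ j, ‖C i j‖ := hj₀.trans hi₀
  have hle : ∀ i j, ‖C i j‖ ≤ ⨆ i, ⨆ j, ‖C i j‖ := fun i j =>
    (le_ciSup (Finite.bddAbove_range (fun j => ‖C i j‖)) j).trans
      (le_ciSup (Finite.bddAbove_range (fun i => ⨆ j, ‖C i j‖)) i)
  constructor
  · have hsingle : single i₀ j₀ (1 : 𝕜) ≠ 0 := fun h =>
      one_ne_zero (α := 𝕜) (by simpa using congrFun (congrFun h i₀) j₀)
    refine ⟨single i₀ j₀ 1, hsingle, ?_⟩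
    simp [hadamard_single, frobenius_norm_single, hmax]
  · rintro _ ⟨Y, hY, rfl⟩
    have hY : 0 < ‖Y‖ := norm_pos_iff.2 hY
    rw [div_le_iff₀ hY]
    exact frobenius_norm_hadamard_le (hmax ▸ norm_nonneg _) hle Y

end Frobenius

theorem diagonal_mul_add_mul_diagonal {R ι κ : Type*} [CommSemiring R] [Fintype ι] [Fintype κ]
    [DecidableEq ι] [DecidableEq κ] (α : ι → R) (β : κ → R) (Y : Matrix ι κ R) :
    diagonal α * Y + Y * diagonal β = (of fun i j => α i + β j) ⊙ Y := by
  ext i j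
  simp [diagonal_mul, mul_diagonal, mul_add, mul_comm]

section Similarity

variable {R ι κ : Type*} [CommRing R] [Fintype ι] [Fintype κ] [DecidableEq ι] [DecidableEq κ]
  {P : Matrix ι ι R} {Q : Matrix κ κ R}

theorem image_inv_mul_mul_inv_ne_zero (hP : IsUnit P.det) (hQ : IsUnit Q.det) :
    (fun X => P⁻¹ * X * Q⁻¹) '' {X : Matrix ι κ R | X ≠ 0} = {Y | Y ≠ 0} := by
  ext Y
  constructor
  · rintro ⟨X, hX, rfl⟩ h
    refine hX ?_
    simpa [Matrix.mul_assoc, mul_nonsing_inv_cancel_left _ _ hP, nonsing_inv_mul _ hQ] using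
      congrArg (fun Z => P * Z * Q) h
  · intro hY
    refine ⟨P * Y * Q, fun h => hY ?_, ?_⟩
    · simpa [Matrix.mul_assoc, nonsing_inv_mul_cancel_left _ _ hP, mul_nonsing_inv _ hQ] using
        congrArg (fun Z => P⁻¹ * Z * Q⁻¹) h
    · simp [Matrix.mul_assoc, nonsing_inv_mul_cancel_left _ _ hP, mul_nonsing_inv _ hQ]

theorem inv_mul_sylvester_mul_inv (hP : IsUnit P.det) (hQ : IsUnit Q.det)
    {A DA : Matrix ι ι R} {B DB : Matrix κ κ R} (hA : A = P * DA * P⁻¹) (hB : B = Q⁻¹ * DB * Q)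
    (X : Matrix ι κ R) :
    P⁻¹ * (A * X + X * B) * Q⁻¹ = DA * (P⁻¹ * X * Q⁻¹) + P⁻¹ * X * Q⁻¹ * DB := by
  subst hA hB
  simp [Matrix.mul_add, Matrix.add_mul, Matrix.mul_assoc, nonsing_inv_mul_cancel_left _ _ hP,
    mul_nonsing_inv_cancel_right _ _ hQ]

end Similarity

end Matrix

theorem re_froInner_self {n m : ℕ} (Y : Matrix (Fin n) (Fin m) ℂ) :
    (froInner Y Y).re = ‖Y‖ ^ 2 := by
  rw [froInner, frobenius_norm_sq, Finset.sum_comm]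
  simp [trace, mul_apply, Complex.sq_norm, Complex.normSq_apply]

theorem uvNorm_eq_frobenius_norm {n m : ℕ} (U : Matrix (Fin n) (Fin n) ℂ)
    (V : Matrix (Fin m) (Fin m) ℂ) (X : Matrix (Fin n) (Fin m) ℂ) :
    uvNorm U V X = ‖U⁻¹ * X * (Vᴴ)⁻¹‖ := by
  rw [uvNorm, re_froInner_self, conjTranspose_nonsing_inv, Real.sqrt_sq (norm_nonneg _)]

/-- the operator norm of the Sylvester operator with respect to ‖·‖_{U,V},
i.e. the maximum of ‖S(X)‖_{U,V}/‖X‖_{U,V} over X ≠ 0, equals max_{i,j} |α_i + β_j|. -/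
theorem stmt6 {n m : ℕ} (hn : 0 < n) (hm : 0 < m)
    (A U : Matrix (Fin n) (Fin n) ℂ) (B V : Matrix (Fin m) (Fin m) ℂ)
    (α : Fin n → ℂ) (β : Fin m → ℂ)
    (hU : IsUnit U.det) (hV : IsUnit V.det)
    (hA : A = U * Matrix.diagonal α * U⁻¹)
    (hB : Bᴴ = V * Matrix.diagonal (fun j => starRingEnd ℂ (β j)) * V⁻¹) :
    IsGreatest
      ((fun X : Matrix (Fin n) (Fin m) ℂ => uvNorm U V (A * X + X * B) / uvNorm U V X) ''
        {X | X ≠ 0})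
      (⨆ i : Fin n, ⨆ j : Fin m, ‖α i + β j‖) := by
  have : Nonempty (Fin n) := ⟨⟨0, hn⟩⟩
  have : Nonempty (Fin m) := ⟨⟨0, hm⟩⟩
  have hVH : IsUnit Vᴴ.det := by simpa [det_conjTranspose] using hV.star
  have hB' : B = (Vᴴ)⁻¹ * diagonal β * Vᴴ := by
    simpa [conjTranspose_nonsing_inv, Pi.star_def, Matrix.mul_assoc] using
      congrArg conjTranspose hB
  have hquot : (fun X => uvNorm U V (A * X + X * B) / uvNorm U V X) =
      (fun Y => ‖(of fun i j => α i + β j) ⊙ Y‖ / ‖Y‖) ∘ (fun X => U⁻¹ * X * (Vᴴ)⁻¹) := by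
    funext X
    rw [Function.comp_apply, uvNorm_eq_frobenius_norm, uvNorm_eq_frobenius_norm,
      inv_mul_sylvester_mul_inv hU hVH hA hB', diagonal_mul_add_mul_diagonal]
  rw [hquot, Set.image_comp, image_inv_mul_mul_inv_ne_zero hU hVH]
  exact isGreatest_frobenius_norm_hadamard_div _
end

section
/- If α_i + β_j ≠ 0 for all i, j, then the Sylvester operator S(X) = AX + XB is invertible and its inverse is S⁻¹(X) = U ((1/(α_i + β_j))_{i,j} ⊙ (U⁻¹ X V⁻ᴴ)) Vᴴ. -/
/-!
Taking conjugate transposes, `B = (Vᴴ)⁻¹ D_β Vᴴ`, so conjugating by `U` on the left and `Vᴴ` on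
the right turns `X ↦ A X + X B` into the diagonal Sylvester operator `Y ↦ D_α Y + Y D_β`.
That operator multiplies the entry `(i, j)` by `α i + β j`, so the Hadamard product with
`((α i + β j)⁻¹)` inverts it on both sides.
-/

open Matrix

section DiagonalSylvester

variable {K m n : Type*} [Fintype m] [Fintype n] [DecidableEq m] [DecidableEq n]

theorem diagonal_mul_add_mul_diagonal_apply [CommSemiring K] (a : m → K) (b : n → K)
    (M : Matrix m n K) (i : m) (j : n) :
    (diagonal a * M + M * diagonal b) i j = (a i + b j) * M i j := by
  rw [Matrix.add_apply, diagonal_mul, mul_diagonal, add_mul, mul_comm (M i j)]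

variable [Field K] {a : m → K} {b : n → K}

theorem diagonal_mul_add_mul_diagonal_hadamard_inv (hab : ∀ i j, a i + b j ≠ 0)
    (M : Matrix m n K) :
    diagonal a * (of (fun i j => (a i + b j)⁻¹) ⊙ M) +
      (of (fun i j => (a i + b j)⁻¹) ⊙ M) * diagonal b = M := by
  ext i j
  rw [diagonal_mul_add_mul_diagonal_apply, hadamard_apply, of_apply,
    mul_inv_cancel_left₀ (hab i j)]

theorem hadamard_inv_diagonal_mul_add_mul_diagonal (hab : ∀ i j, a i + b j ≠ 0)
    (M : Matrix m n K) :
    of (fun i j => (a i + b j)⁻¹) ⊙ (diagonal a * M + M * diagonal b) = M := by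
  ext i j
  rw [hadamard_apply, diagonal_mul_add_mul_diagonal_apply, of_apply,
    inv_mul_cancel_left₀ (hab i j)]

end DiagonalSylvester

section Similarity

variable {R m n : Type*} [CommRing R] [Fintype m] [Fintype n] [DecidableEq m] [DecidableEq n]
  {P : Matrix m m R} {Q : Matrix n n R}

theorem mul_nonsing_inv_mul_mul_cancel (hP : IsUnit P.det) (hQ : IsUnit Q.det)
    (X : Matrix m n R) : P * (P⁻¹ * X * Q⁻¹) * Q = X := by
  simp only [Matrix.mul_assoc, nonsing_inv_mul Q hQ, Matrix.mul_one,
    mul_nonsing_inv_cancel_left P X hP]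

theorem nonsing_inv_mul_mul_mul_cancel (hP : IsUnit P.det) (hQ : IsUnit Q.det)
    (Y : Matrix m n R) : P⁻¹ * (P * Y * Q) * Q⁻¹ = Y := by
  simp only [Matrix.mul_assoc, mul_nonsing_inv Q hQ, Matrix.mul_one,
    nonsing_inv_mul_cancel_left P Y hP]

theorem sylvester_similar (hP : IsUnit P.det) (hQ : IsUnit Q.det) (D : Matrix m m R)
    (E : Matrix n n R) (Y : Matrix m n R) :
    P * D * P⁻¹ * (P * Y * Q) + P * Y * Q * (Q⁻¹ * E * Q) = P * (D * Y + Y * E) * Q := by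
  simp only [Matrix.mul_add, Matrix.add_mul, Matrix.mul_assoc,
    nonsing_inv_mul_cancel_left P _ hP, mul_nonsing_inv_cancel_left Q _ hQ]

end Similarity

section Sylvester

variable {K m n : Type*} [Field K] [Fintype m] [Fintype n] [DecidableEq m] [DecidableEq n]
  {A P : Matrix m m K} {B Q : Matrix n n K} {a : m → K} {b : n → K}

theorem sylvester_hadamard_inv_similar (hP : IsUnit P.det) (hQ : IsUnit Q.det)
    (hA : A = P * diagonal a * P⁻¹) (hB : B = Q⁻¹ * diagonal b * Q)
    (hab : ∀ i j, a i + b j ≠ 0) (X : Matrix m n K) :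
    let Y := P * (of (fun i j => (a i + b j)⁻¹) ⊙ (P⁻¹ * X * Q⁻¹)) * Q
    A * Y + Y * B = X := by
  intro Y
  rw [hA, hB, sylvester_similar hP hQ, diagonal_mul_add_mul_diagonal_hadamard_inv hab,
    mul_nonsing_inv_mul_mul_cancel hP hQ]

theorem hadamard_inv_similar_sylvester (hP : IsUnit P.det) (hQ : IsUnit Q.det)
    (hA : A = P * diagonal a * P⁻¹) (hB : B = Q⁻¹ * diagonal b * Q)
    (hab : ∀ i j, a i + b j ≠ 0) (X : Matrix m n K) :
    P * (of (fun i j => (a i + b j)⁻¹) ⊙ (P⁻¹ * (A * X + X * B) * Q⁻¹)) * Q = X := by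
  obtain ⟨Y, rfl⟩ : ∃ Y, X = P * Y * Q := ⟨_, (mul_nonsing_inv_mul_mul_cancel hP hQ X).symm⟩
  rw [hA, hB, sylvester_similar hP hQ, nonsing_inv_mul_mul_mul_cancel hP hQ,
    hadamard_inv_diagonal_mul_add_mul_diagonal hab]

end Sylvester

/-- if all α_i + β_j ≠ 0 then S(X) = AX + XB is invertible with inverse
S⁻¹(X) = U ((1/(α_i + β_j))_{i,j} ⊙ U⁻¹ X V⁻ᴴ) Vᴴ. -/
theorem stmt7 {n m : ℕ} (A U : Matrix (Fin n) (Fin n) ℂ) (B V : Matrix (Fin m) (Fin m) ℂ)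
    (α : Fin n → ℂ) (β : Fin m → ℂ)
    (hU : IsUnit U.det) (hV : IsUnit V.det)
    (hA : A = U * Matrix.diagonal α * U⁻¹)
    (hB : Bᴴ = V * Matrix.diagonal (fun j => starRingEnd ℂ (β j)) * V⁻¹)
    (hαβ : ∀ i j, α i + β j ≠ 0) :
    Function.Bijective (fun X : Matrix (Fin n) (Fin m) ℂ => A * X + X * B) ∧
    ∀ X : Matrix (Fin n) (Fin m) ℂ,
      (let T := fun Y : Matrix (Fin n) (Fin m) ℂ =>
        U * ((Matrix.of fun i j => (α i + β j)⁻¹) ⊙ (U⁻¹ * Y * (V⁻¹)ᴴ)) * Vᴴ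
       A * T X + T X * B = X ∧ T (A * X + X * B) = X) := by
  have hVH : IsUnit Vᴴ.det := by rwa [det_conjTranspose, isUnit_star]
  have hB' : B = (Vᴴ)⁻¹ * diagonal β * Vᴴ := by
    simpa [conjTranspose_nonsing_inv, Matrix.mul_assoc, Pi.star_def] using
      congrArg conjTranspose hB
  simp only [conjTranspose_nonsing_inv]
  have right_inv := sylvester_hadamard_inv_similar hU hVH hA hB' hαβ
  have left_inv := hadamard_inv_similar_sylvester hU hVH hA hB' hαβ
  exact ⟨Function.bijective_iff_has_inverse.mpr ⟨_, fun X => left_inv X, fun X => right_inv X⟩,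
    fun X => ⟨right_inv X, left_inv X⟩⟩
end

section
/- Under the assumptions of the spectral decomposition, the solution of the differential Sylvester equation X'(t) = AX(t) + X(t)B + C with X(0) = D is X(t) = U ((e^{t(α_i+β_j)})_{i,j} ⊙ U⁻¹ D V⁻ᴴ + (φ_t(α_i+β_j))_{i,j} ⊙ U⁻¹ C V⁻ᴴ) Vᴴ, where φ_t(α) = (e^{tα}−1)/α if α ≠ 0 and φ_t(0) = t. -/
/-!
Conjugating by `U` and `Vᴴ` turns the equation into the diagonal Sylvester equation
`Y' = diag(α) Y + Y diag(β) + F`, which decouples into the scalar equations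
`y' = (α_i + β_j) y + f`. Each is solved by `y(t) = e^{tγ} e + φ_t(γ) f`, because
`φ_t(γ) = ∫₀ᵗ e^{sγ} ds` has derivative `e^{tγ} = γ φ_t(γ) + 1` in `t`.
-/

open Matrix

attribute [local instance] Matrix.normedAddCommGroup Matrix.normedSpace

theorem hasDerivAt_cexp_ofReal_mul (γ : ℂ) (t : ℝ) :
    HasDerivAt (fun s : ℝ => Complex.exp (s * γ)) (γ * Complex.exp (t * γ)) t := by
  simpa [mul_comm] using (((hasDerivAt_id (t : ℂ)).mul_const γ).cexp).comp_ofReal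

/-- `∫₀ᵗ e^{sγ} ds`, written `φ_t(γ)` in the paper. -/
noncomputable def integralExp (t : ℝ) (γ : ℂ) : ℂ :=
  if γ ≠ 0 then (Complex.exp ((t : ℂ) * γ) - 1) / γ else (t : ℂ)

@[simp]
theorem integralExp_zero (γ : ℂ) : integralExp 0 γ = 0 := by
  simp [integralExp]

theorem mul_integralExp_add_one (t : ℝ) (γ : ℂ) :
    γ * integralExp t γ + 1 = Complex.exp (t * γ) := by
  by_cases hγ : γ = 0
  · simp [integralExp, hγ]
  · rw [integralExp, if_pos hγ, mul_div_cancel₀ _ hγ, sub_add_cancel]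

theorem hasDerivAt_integralExp (t : ℝ) (γ : ℂ) :
    HasDerivAt (fun s => integralExp s γ) (Complex.exp (t * γ)) t := by
  by_cases hγ : γ = 0
  · simpa [integralExp, hγ] using (hasDerivAt_id t).ofReal_comp
  · simp only [integralExp, if_pos hγ]
    simpa [mul_div_cancel_left₀ _ hγ] using
      ((hasDerivAt_cexp_ofReal_mul γ t).sub_const 1).div_const γ

theorem hasDerivAt_cexp_mul_add_integralExp_mul (γ e f : ℂ) (t : ℝ) :
    HasDerivAt (fun s : ℝ => Complex.exp (s * γ) * e + integralExp s γ * f)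
      (γ * (Complex.exp (t * γ) * e + integralExp t γ * f) + f) t := by
  refine (((hasDerivAt_cexp_ofReal_mul γ t).mul_const e).add
    ((hasDerivAt_integralExp t γ).mul_const f)).congr_deriv ?_
  linear_combination -f * mul_integralExp_add_one t γ

section DiagSylvester

variable {ι κ : Type*}

noncomputable def diagSylvesterSolution (α : ι → ℂ) (β : κ → ℂ) (E F : Matrix ι κ ℂ)
    (t : ℝ) : Matrix ι κ ℂ :=
  (of fun i j => Complex.exp ((t : ℂ) * (α i + β j))) ⊙ E
    + (of fun i j => integralExp t (α i + β j)) ⊙ F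

theorem diagSylvesterSolution_zero (α : ι → ℂ) (β : κ → ℂ) (E F : Matrix ι κ ℂ) :
    diagSylvesterSolution α β E F 0 = E := by
  ext i j
  simp [diagSylvesterSolution]

theorem hasDerivAt_diagSylvesterSolution [Fintype ι] [Fintype κ] [DecidableEq ι] [DecidableEq κ]
    (α : ι → ℂ) (β : κ → ℂ) (E F : Matrix ι κ ℂ) (t : ℝ) :
    HasDerivAt (diagSylvesterSolution α β E F)
      (diagonal α * diagSylvesterSolution α β E F t
        + diagSylvesterSolution α β E F t * diagonal β + F) t := by
  refine hasDerivAt_pi.2 fun i => hasDerivAt_pi.2 fun j => ?_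
  refine (hasDerivAt_cexp_mul_add_integralExp_mul (α i + β j) (E i j) (F i j) t).congr_deriv ?_
  simp only [diagSylvesterSolution, Matrix.add_apply, diagonal_mul, mul_diagonal, hadamard_apply,
    of_apply]
  ring

end DiagSylvester

theorem HasDerivAt.matrix_const_mul_mul_const {𝕜 : Type*} [RCLike 𝕜] {l m n p : Type*}
    [Fintype l] [Fintype m] [Fintype n] [Fintype p] (U : Matrix l m 𝕜) (W : Matrix n p 𝕜)
    {Y : ℝ → Matrix m n 𝕜} {Y' : Matrix m n 𝕜} {t : ℝ} (h : HasDerivAt Y Y' t) :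
    HasDerivAt (fun s => U * Y s * W) (U * Y' * W) t :=
  (LinearMap.toContinuousLinearMap
    ((mulRightLinearMap l ℝ W).comp (mulLeftLinearMap n ℝ U))).hasFDerivAt.comp_hasDerivAt t h

namespace Matrix

section Conjugation

variable {R : Type*} [CommRing R] {l m n : Type*} [Fintype m] [Fintype n]

theorem conj_mul_conj [DecidableEq m] {U : Matrix m m R} (hU : IsUnit U.det) (M : Matrix m m R)
    (Y : Matrix m n R) (W : Matrix n l R) : U * M * U⁻¹ * (U * Y * W) = U * (M * Y) * W := by
  simp only [Matrix.mul_assoc, nonsing_inv_mul_cancel_left _ _ hU]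

theorem mul_conj_conj [DecidableEq n] {W : Matrix n n R} (hW : IsUnit W.det) (U : Matrix l m R)
    (Y : Matrix m n R) (N : Matrix n n R) : U * Y * W * (W⁻¹ * N * W) = U * (Y * N) * W := by
  simp only [Matrix.mul_assoc, mul_nonsing_inv_cancel_left _ _ hW]

theorem mul_mul_inv_mul_inv_mul [DecidableEq m] [DecidableEq n] {U : Matrix m m R}
    {W : Matrix n n R} (hU : IsUnit U.det) (hW : IsUnit W.det) (C : Matrix m n R) :
    U * (U⁻¹ * C * W⁻¹) * W = C := by
  simp only [Matrix.mul_assoc, nonsing_inv_mul _ hW, Matrix.mul_one,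
    mul_nonsing_inv_cancel_left _ _ hU]

theorem eq_conjTranspose_inv_mul_diagonal_mul [StarRing R] [DecidableEq n] {B V : Matrix n n R}
    {β : n → R} (hB : Bᴴ = V * diagonal (fun j => starRingEnd R (β j)) * V⁻¹) :
    B = (Vᴴ)⁻¹ * diagonal β * Vᴴ := by
  rw [← conjTranspose_conjTranspose B, hB]
  simp [conjTranspose_mul, diagonal_conjTranspose, Pi.star_def, starRingEnd_apply,
    conjTranspose_nonsing_inv, Matrix.mul_assoc]

end Conjugation

end Matrix

/-- under the spectral decompositions A = U diag(α) U⁻¹,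
Bᴴ = V diag(β̄) V⁻¹, the function
X(t) = U ((e^{t(α_i+β_j)})_{i,j} ⊙ U⁻¹ D V⁻ᴴ + (φ_t(α_i+β_j))_{i,j} ⊙ U⁻¹ C V⁻ᴴ) Vᴴ,
with φ_t(γ) = (e^{tγ}−1)/γ for γ ≠ 0 and φ_t(0) = t, solves
X'(t) = AX(t) + X(t)B + C, X(0) = D. -/
theorem stmt13 {n m : ℕ} (A U : Matrix (Fin n) (Fin n) ℂ) (B V : Matrix (Fin m) (Fin m) ℂ)
    (C D : Matrix (Fin n) (Fin m) ℂ)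
    (α : Fin n → ℂ) (β : Fin m → ℂ)
    (hU : IsUnit U.det) (hV : IsUnit V.det)
    (hA : A = U * Matrix.diagonal α * U⁻¹)
    (hB : Bᴴ = V * Matrix.diagonal (fun j => starRingEnd ℂ (β j)) * V⁻¹) :
    let φ : ℝ → ℂ → ℂ := fun t γ =>
      if γ ≠ 0 then (Complex.exp ((t : ℂ) * γ) - 1) / γ else (t : ℂ)
    let X : ℝ → Matrix (Fin n) (Fin m) ℂ := fun t =>
      U * ((Matrix.of fun i j => Complex.exp ((t : ℂ) * (α i + β j)))
            ⊙ (U⁻¹ * D * (V⁻¹)ᴴ)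
          + (Matrix.of fun i j => φ t (α i + β j)) ⊙ (U⁻¹ * C * (V⁻¹)ᴴ)) * Vᴴ
    X 0 = D ∧ ∀ t : ℝ, HasDerivAt X (A * X t + X t * B + C) t := by
  intro φ X
  have hVH : IsUnit Vᴴ.det := by simpa [det_conjTranspose] using hV
  have hX : X = fun t =>
      U * diagSylvesterSolution α β (U⁻¹ * D * (V⁻¹)ᴴ) (U⁻¹ * C * (V⁻¹)ᴴ) t * Vᴴ := rfl
  rw [conjTranspose_nonsing_inv] at hX
  refine ⟨?_, fun t => ?_⟩ <;> rw [hX] <;> beta_reduce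
  · rw [diagSylvesterSolution_zero, mul_mul_inv_mul_inv_mul hU hVH]
  · refine ((hasDerivAt_diagSylvesterSolution α β _ _ t).matrix_const_mul_mul_const
      U Vᴴ).congr_deriv ?_
    rw [hA, eq_conjTranspose_inv_mul_diagonal_mul hB, conj_mul_conj hU, mul_conj_conj hVH,
      Matrix.mul_add, Matrix.add_mul, Matrix.mul_add, Matrix.add_mul,
      mul_mul_inv_mul_inv_mul hU hVH]
end

section
/- If A and B are diagonalizable and all sums α_i + β_j of an eigenvalue α_i of A and an eigenvalue β_j of B are nonzero, then for every C ∈ ℂ^(n×m) the Sylvester equation AX + XB = C has a unique solution X ∈ ℂ^(n×m). -/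
/-!
Writing `A = U D U⁻¹` and `B = W E W⁻¹` with `D = diagonal α` and `E = diagonal β`, the
substitution `X = U Y W⁻¹` turns `A X + X B = C` into `D Y + Y E = U⁻¹ C W`. Entrywise this
reads `(α i + β j) Y i j = (U⁻¹ C W) i j`, which has exactly one solution when no `α i + β j`
vanishes.
-/

open Matrix

namespace Matrix

variable {R K : Type*} [CommRing R] [Field K] {m n : Type*} [Fintype m] [Fintype n]
  [DecidableEq m] [DecidableEq n]

theorem diagonal_mul_add_mul_diagonal_apply (α : n → K) (β : m → K) (Y : Matrix n m K)
    (i : n) (j : m) :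
    (diagonal α * Y + Y * diagonal β) i j = (α i + β j) * Y i j := by
  rw [add_apply, diagonal_mul, mul_diagonal]
  ring

theorem existsUnique_diagonal_mul_add_mul_diagonal_eq {α : n → K} {β : m → K}
    (hαβ : ∀ i j, α i + β j ≠ 0) (C : Matrix n m K) :
    ∃! Y : Matrix n m K, diagonal α * Y + Y * diagonal β = C := by
  have hsolve : ∀ Y : Matrix n m K,
      diagonal α * Y + Y * diagonal β = C ↔ Y = of fun i j ↦ C i j / (α i + β j) := by
    intro Y
    simp only [← ext_iff, diagonal_mul_add_mul_diagonal_apply, of_apply,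
      eq_div_iff (hαβ _ _), mul_comm (Y _ _)]
  exact (existsUnique_congr hsolve).2 existsUnique_eq

noncomputable def mulLeftMulRightInvEquiv {U : Matrix n n R} {W : Matrix m m R}
    (hU : IsUnit U.det) (hW : IsUnit W.det) : Matrix n m R ≃ Matrix n m R where
  toFun Y := U * Y * W⁻¹
  invFun X := U⁻¹ * X * W
  left_inv Y := by
    simp only [Matrix.mul_assoc, nonsing_inv_mul_cancel_left _ _ hU,
      nonsing_inv_mul_cancel_right _ _ hW]
  right_inv X := by
    simp only [Matrix.mul_assoc, mul_nonsing_inv_cancel_left _ _ hU,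
      mul_nonsing_inv_cancel_right _ _ hW]

theorem mulLeftMulRightInvEquiv_apply {U : Matrix n n R} {W : Matrix m m R}
    (hU : IsUnit U.det) (hW : IsUnit W.det) (Y : Matrix n m R) :
    mulLeftMulRightInvEquiv hU hW Y = U * Y * W⁻¹ :=
  rfl

theorem conj_mul_add_mul_conj {U D : Matrix n n R} {W E : Matrix m m R}
    (hU : IsUnit U.det) (hW : IsUnit W.det) (Y : Matrix n m R) :
    U * D * U⁻¹ * (U * Y * W⁻¹) + U * Y * W⁻¹ * (W * E * W⁻¹) =
      U * (D * Y + Y * E) * W⁻¹ := by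
  simp only [Matrix.mul_add, Matrix.add_mul, Matrix.mul_assoc,
    nonsing_inv_mul_cancel_left _ _ hU, nonsing_inv_mul_cancel_left _ _ hW]

end Matrix

/-- if A and B are diagonalizable and all eigenvalue sums α_i + β_j are
nonzero, then for every C the Sylvester equation AX + XB = C has a unique solution. -/
theorem stmt17 {n m : ℕ} (A U : Matrix (Fin n) (Fin n) ℂ) (B W : Matrix (Fin m) (Fin m) ℂ)
    (α : Fin n → ℂ) (β : Fin m → ℂ)
    (hU : IsUnit U.det) (hW : IsUnit W.det)
    (hA : A = U * Matrix.diagonal α * U⁻¹)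
    (hB : B = W * Matrix.diagonal β * W⁻¹)
    (hαβ : ∀ i j, α i + β j ≠ 0) :
    ∀ C : Matrix (Fin n) (Fin m) ℂ, ∃! X : Matrix (Fin n) (Fin m) ℂ, A * X + X * B = C := by
  intro C
  subst hA hB
  let e := mulLeftMulRightInvEquiv hU hW
  rw [← e.existsUnique_congr_right]
  refine (existsUnique_congr fun Y ↦ ?_).2
    (existsUnique_diagonal_mul_add_mul_diagonal_eq hαβ (e.symm C))
  rw [e.eq_symm_apply, mulLeftMulRightInvEquiv_apply, mulLeftMulRightInvEquiv_apply,
    conj_mul_add_mul_conj hU hW]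
end

section
/- If all eigenvalue sums α_i + β_j of diagonalizable matrices A and B have negative real part, then for every X ∈ ℂ^(n×m), e^{tS}(X) → 0 as t → ∞, and ∫₀^∞ e^{sS}(C) ds = −S⁻¹(C) for every C, where S(X) = AX + XB. -/
/-!
Conjugating by `X ↦ U⁻¹ X W` turns `S X = AX + XB` into `Y ↦ diagonal α * Y + Y * diagonal β`,
which scales the `(i, j)` entry by `α i + β j`. Hence the matrices `U * single i j 1 * W⁻¹`
form an eigenbasis of `S`, and on the component `Xᵢⱼ` of `X` along it the exponential series
sums to `e^{t(α i + β j)} Xᵢⱼ`. Each component decays as `t → ∞`, integrates over `(0, ∞)` to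
`-(α i + β j)⁻¹ Xᵢⱼ`, and `S` multiplies this back by `α i + β j`; so
`S (∫₀^∞ e^{sS} C ds) = -∑ Cᵢⱼ = -C`.
-/

open Matrix

attribute [local instance] Matrix.normedAddCommGroup Matrix.normedSpace

/-- The Sylvester operator S(X) = AX + XB as a linear endomorphism of ℂ^(n×m). -/
noncomputable def sylvMap {n m : ℕ} (A : Matrix (Fin n) (Fin n) ℂ) (B : Matrix (Fin m) (Fin m) ℂ) :
    Module.End ℂ (Matrix (Fin n) (Fin m) ℂ) where
  toFun X := A * X + X * B
  map_add' X Y := by simp [Matrix.mul_add, Matrix.add_mul]; abel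
  map_smul' c X := by simp [Matrix.mul_smul, Matrix.smul_mul]

/-- The operator exponential e^{tS}(X) = ∑ₖ (tᵏ/k!) Sᵏ(X). -/
noncomputable def sylvExp {n m : ℕ} (A : Matrix (Fin n) (Fin n) ℂ)
    (B : Matrix (Fin m) (Fin m) ℂ) (t : ℝ) (X : Matrix (Fin n) (Fin m) ℂ) :
    Matrix (Fin n) (Fin m) ℂ :=
  ∑' k : ℕ, (((t : ℂ) ^ k / (Nat.factorial k : ℂ)) • ((sylvMap A B ^ k) X))

open scoped Nat
open Filter Topology MeasureTheory Set

theorem diagonal_mul_single {ι κ R : Type*} [Fintype ι] [DecidableEq ι] [DecidableEq κ]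
    [Semiring R] (d : ι → R) (i : ι) (j : κ) (c : R) :
    diagonal d * single i j c = d i • single i j c := by
  ext k l
  obtain rfl | hik := eq_or_ne i k
  · simp [single, diagonal_mul]
  · simp [single, hik]

theorem single_mul_diagonal {ι κ R : Type*} [Fintype κ] [DecidableEq ι] [DecidableEq κ]
    [CommSemiring R] (d : κ → R) (i : ι) (j : κ) (c : R) :
    single i j c * diagonal d = d j • single i j c := by
  ext k l
  obtain rfl | hjl := eq_or_ne j l
  · simp [single, mul_diagonal, mul_comm]
  · simp [single, hjl]

section Eigenbasis

variable {ι κ R : Type*} [Fintype ι] [Fintype κ] [DecidableEq ι] [DecidableEq κ] [CommRing R]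
  {U : Matrix ι ι R} {W : Matrix κ κ R}

noncomputable def sylvComponent (U : Matrix ι ι R) (W : Matrix κ κ R) (X : Matrix ι κ R)
    (i : ι) (j : κ) : Matrix ι κ R :=
  U * single i j ((U⁻¹ * X * W) i j) * W⁻¹

theorem sum_sylvComponent (hU : IsUnit U.det) (hW : IsUnit W.det) (X : Matrix ι κ R) :
    ∑ i, ∑ j, sylvComponent U W X i j = X := by
  calc ∑ i, ∑ j, sylvComponent U W X i j
      = U * (∑ i, ∑ j, single i j ((U⁻¹ * X * W) i j)) * W⁻¹ := by
        simp only [sylvComponent, Matrix.mul_sum, Matrix.sum_mul]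
    _ = X := by
        rw [← matrix_eq_sum_single, ← Matrix.mul_assoc, ← Matrix.mul_assoc, mul_nonsing_inv _ hU,
          Matrix.one_mul, mul_nonsing_inv_cancel_right _ _ hW]

theorem conj_diagonal_mul_add_mul_conj_diagonal (hU : IsUnit U.det) (hW : IsUnit W.det)
    (α : ι → R) (β : κ → R) (i : ι) (j : κ) (c : R) :
    U * diagonal α * U⁻¹ * (U * single i j c * W⁻¹) +
        U * single i j c * W⁻¹ * (W * diagonal β * W⁻¹) =
      (α i + β j) • (U * single i j c * W⁻¹) := by
  have hleft : U * diagonal α * U⁻¹ * (U * single i j c * W⁻¹) =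
      U * (diagonal α * single i j c) * W⁻¹ := by
    simp only [Matrix.mul_assoc, nonsing_inv_mul_cancel_left _ _ hU]
  have hright : U * single i j c * W⁻¹ * (W * diagonal β * W⁻¹) =
      U * (single i j c * diagonal β) * W⁻¹ := by
    simp only [Matrix.mul_assoc, nonsing_inv_mul_cancel_left _ _ hW]
  rw [hleft, hright, diagonal_mul_single, single_mul_diagonal]
  simp only [Matrix.mul_smul, Matrix.smul_mul, add_smul]

end Eigenbasis

theorem hasSum_expSeries_apply_of_apply_eq_smul {E : Type*} [AddCommGroup E] [Module ℂ E]
    [TopologicalSpace E] [ContinuousSMul ℂ E] {f : Module.End ℂ E} {μ : ℂ} {v : E}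
    (hv : f v = μ • v) (z : ℂ) :
    HasSum (fun k => (z ^ k / k !) • (f ^ k) v) (Complex.exp (μ * z) • v) := by
  have hpow : ∀ k : ℕ, (f ^ k) v = μ ^ k • v := fun k => by
    induction k with
    | zero => simp
    | succ k ih => rw [pow_succ', Module.End.mul_apply, ih, map_smul, hv, smul_smul, pow_succ]
  simp_rw [hpow, smul_smul]
  rw [Complex.exp_eq_exp_ℂ]
  convert (NormedSpace.expSeries_div_hasSum_exp (μ * z)).smul_const v using 3 with k
  ring

theorem tendsto_cexp_mul_ofReal_atTop {γ : ℂ} (hγ : γ.re < 0) :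
    Tendsto (fun t : ℝ => Complex.exp (γ * t)) atTop (𝓝 0) := by
  rw [Complex.tendsto_exp_nhds_zero_iff]
  simp only [Complex.re_mul_ofReal]
  exact tendsto_id.const_mul_atTop_of_neg hγ

section Sylvester

variable {n m : ℕ} {U : Matrix (Fin n) (Fin n) ℂ} {W : Matrix (Fin m) (Fin m) ℂ}
  {α : Fin n → ℂ} {β : Fin m → ℂ}

theorem sylvMap_sylvComponent (hU : IsUnit U.det) (hW : IsUnit W.det)
    (X : Matrix (Fin n) (Fin m) ℂ) (i : Fin n) (j : Fin m) :
    sylvMap (U * diagonal α * U⁻¹) (W * diagonal β * W⁻¹) (sylvComponent U W X i j) =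
      (α i + β j) • sylvComponent U W X i j :=
  conj_diagonal_mul_add_mul_conj_diagonal hU hW α β i j _

theorem sylvExp_eq_sum (hU : IsUnit U.det) (hW : IsUnit W.det) (t : ℝ)
    (X : Matrix (Fin n) (Fin m) ℂ) :
    sylvExp (U * diagonal α * U⁻¹) (W * diagonal β * W⁻¹) t X =
      ∑ i, ∑ j, Complex.exp ((α i + β j) * t) • sylvComponent U W X i j := by
  refine HasSum.tsum_eq ?_
  set S := sylvMap (U * diagonal α * U⁻¹) (W * diagonal β * W⁻¹)
  have hterm : ∀ k : ℕ, ((t : ℂ) ^ k / k !) • (S ^ k) X =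
      ∑ i, ∑ j, ((t : ℂ) ^ k / k !) • (S ^ k) (sylvComponent U W X i j) := fun k => by
    conv_lhs => rw [← sum_sylvComponent hU hW X]
    simp only [map_sum, Finset.smul_sum]
  simp_rw [hterm]
  exact hasSum_sum fun i _ => hasSum_sum fun j _ =>
    hasSum_expSeries_apply_of_apply_eq_smul (sylvMap_sylvComponent hU hW X i j) t

theorem tendsto_sylvExp_atTop (hU : IsUnit U.det) (hW : IsUnit W.det)
    (hαβ : ∀ i j, (α i + β j).re < 0) (X : Matrix (Fin n) (Fin m) ℂ) :
    Tendsto (fun t : ℝ => sylvExp (U * diagonal α * U⁻¹) (W * diagonal β * W⁻¹) t X)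
      atTop (𝓝 0) := by
  simp_rw [sylvExp_eq_sum hU hW]
  simpa using tendsto_finsetSum Finset.univ fun i _ => tendsto_finsetSum Finset.univ fun j _ =>
    (tendsto_cexp_mul_ofReal_atTop (hαβ i j)).smul_const (sylvComponent U W X i j)

theorem integral_sylvExp (hU : IsUnit U.det) (hW : IsUnit W.det)
    (hαβ : ∀ i j, (α i + β j).re < 0) (C : Matrix (Fin n) (Fin m) ℂ) :
    ∫ s in Ioi (0 : ℝ), sylvExp (U * diagonal α * U⁻¹) (W * diagonal β * W⁻¹) s C =
      ∑ i, ∑ j, (-(α i + β j)⁻¹) • sylvComponent U W C i j := by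
  have hint (i : Fin n) (j : Fin m) :=
    (integrableOn_exp_mul_complex_Ioi (hαβ i j) 0).smul_const (sylvComponent U W C i j)
  simp_rw [sylvExp_eq_sum hU hW]
  rw [integral_finsetSum _ fun i _ => integrable_finsetSum _ fun j _ => hint i j]
  refine Finset.sum_congr rfl fun i _ => ?_
  rw [integral_finsetSum _ fun j _ => hint i j]
  refine Finset.sum_congr rfl fun j _ => ?_
  rw [integral_smul_const, integral_exp_mul_complex_Ioi (hαβ i j)]
  simp [neg_div]

theorem sylvMap_integral_sylvExp (hU : IsUnit U.det) (hW : IsUnit W.det)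
    (hαβ : ∀ i j, (α i + β j).re < 0) (C : Matrix (Fin n) (Fin m) ℂ) :
    sylvMap (U * diagonal α * U⁻¹) (W * diagonal β * W⁻¹)
      (∫ s in Ioi (0 : ℝ), sylvExp (U * diagonal α * U⁻¹) (W * diagonal β * W⁻¹) s C) = -C := by
  have hne : ∀ i j, α i + β j ≠ 0 := fun i j h => (hαβ i j).ne (by simp [h])
  rw [integral_sylvExp hU hW hαβ]
  conv_rhs => rw [← sum_sylvComponent hU hW C]
  simp [map_sum, sylvMap_sylvComponent hU hW, smul_smul, hne]

end Sylvester

/-- if all eigenvalue sums α_i + β_j have negative real part, then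
e^{tS}(X) → 0 as t → ∞, and ∫₀^∞ e^{sS}(C) ds = −S⁻¹(C), i.e. the integral J
satisfies S(J) = −C. -/
theorem stmt19 {n m : ℕ} (A U : Matrix (Fin n) (Fin n) ℂ) (B W : Matrix (Fin m) (Fin m) ℂ)
    (α : Fin n → ℂ) (β : Fin m → ℂ)
    (hU : IsUnit U.det) (hW : IsUnit W.det)
    (hA : A = U * Matrix.diagonal α * U⁻¹)
    (hB : B = W * Matrix.diagonal β * W⁻¹)
    (hαβ : ∀ i j, (α i + β j).re < 0) :
    (∀ X : Matrix (Fin n) (Fin m) ℂ,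
      Filter.Tendsto (fun t : ℝ => sylvExp A B t X) Filter.atTop (nhds 0)) ∧
    (∀ C : Matrix (Fin n) (Fin m) ℂ,
      let J := ∫ s in Set.Ioi (0 : ℝ), sylvExp A B s C
      A * J + J * B = -C) := by
  subst hA hB
  exact ⟨tendsto_sylvExp_atTop hU hW hαβ, sylvMap_integral_sylvExp hU hW hαβ⟩
end
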